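/- arXiv:2511.13870 — 2 statements merged into one kernel-verified Lean document; each statement's English description precedes it below -/
import Mathlib

section
/- Consider the closed-loop stochastic recursion x(k+1) = (A + B K C(k)) x(k) with deterministic initial condition x(0) = x₀ ∈ ℝⁿ, where C(k) = Diag(c₁(k)/p₁, …, cₙ(k)/pₙ) and the family (cᵢ(k))_{k∈ℕ, 1≤i≤n} consists of mutually independent Bernoulli random variables with parameters pᵢ ∈ (0,1]. Let D := A + B K, L := B K, sᵢ := Σ_{k=1}^{n} L_{k,i}², and define g(p₁,…,pₙ) := ‖Dᵀ D + Diag(−s₁ + s₁/p₁, …, −sₙ + sₙ/pₙ)‖₂. Then for every k ∈ ℕ, E[‖x(k+1)‖²] ≤ g(p₁,…,pₙ) · E[‖x(k)‖²]. -/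
open MeasureTheory ProbabilityTheory Matrix Filter

/-- The spectral norm (ℓ²-operator norm) of a real square matrix. -/
noncomputable def specNorm {n : ℕ} (M : Matrix (Fin n) (Fin n) ℝ) : ℝ :=
  ‖LinearMap.toContinuousLinearMap (Matrix.toEuclideanLin M)‖

/-!
Write `ζᵢ = cᵢ(k) / pᵢ`, so that `x(k+1) = (A + L Diag ζ) x(k)` and
`‖x(k+1)‖² = x(k)ᵀ N x(k)` with `N = (A + L Diag ζ)ᵀ (A + L Diag ζ)`. The entries of `N` are
functions of the coin flips at time `k`, while `x(k)` is a function of the earlier flips, so the two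
are independent and `E[x(k)ᵀ N x(k)] = E[x(k)ᵀ (E N) x(k)]`. Since `E ζᵢ = 1` and
`E[ζᵢ ζⱼ] = 1 + δᵢⱼ (1/pᵢ - 1)`, the mean is `E N = DᵀD + Diag(sᵢ (1/pᵢ - 1))`, and
`yᵀ M y ≤ ‖M‖₂ ‖y‖²` concludes.
-/

namespace Matrix

variable {ι κ : Type*} [Fintype ι] [Fintype κ]

lemma dotProduct_mulVec_eq_sum (M : Matrix ι ι ℝ) (y : ι → ℝ) :
    y ⬝ᵥ M *ᵥ y = ∑ j, ∑ j', M j j' * (y j * y j') := by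
  simp only [dotProduct, mulVec, Finset.mul_sum]
  exact Finset.sum_congr rfl fun _ _ => Finset.sum_congr rfl fun _ _ => by ring

lemma mulVec_dotProduct_mulVec_self (N : Matrix κ ι ℝ) (y : ι → ℝ) :
    N *ᵥ y ⬝ᵥ N *ᵥ y = y ⬝ᵥ (Nᵀ * N) *ᵥ y := by
  rw [dotProduct_mulVec, ← mulVec_transpose, mulVec_mulVec, dotProduct_comm]

lemma transpose_mul_self_add_mul_diagonal_apply [DecidableEq ι] (A L : Matrix κ ι ℝ)
    (d : ι → ℝ) (j j' : ι) :
    ((A + L * diagonal d)ᵀ * (A + L * diagonal d)) j j' =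
      (Aᵀ * A) j j' + (Aᵀ * L) j j' * d j' + (Lᵀ * A) j j' * d j +
        (Lᵀ * L) j j' * (d j * d j') := by
  simp only [transpose_add, transpose_mul, diagonal_transpose, Matrix.add_mul, Matrix.mul_add,
    add_apply, ← Matrix.mul_assoc, mul_diagonal]
  simp only [Matrix.mul_assoc (diagonal d), diagonal_mul]
  ring

end Matrix

lemma Measurable.mulVec {Ω ι κ : Type*} [Fintype κ] {_ : MeasurableSpace Ω}
    {M : Ω → Matrix ι κ ℝ} {v : Ω → κ → ℝ} (hM : ∀ i j, Measurable fun ω => M ω i j)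
    (hv : Measurable v) : Measurable fun ω => M ω *ᵥ v ω := by
  rw [measurable_pi_iff]
  intro i
  simp only [Matrix.mulVec, dotProduct]
  fun_prop (disch := exact hM _ _)

lemma dotProduct_mulVec_le_specNorm_mul {n : ℕ} (M : Matrix (Fin n) (Fin n) ℝ)
    (y : Fin n → ℝ) : y ⬝ᵥ M *ᵥ y ≤ specNorm M * (y ⬝ᵥ y) := by
  set v := WithLp.toLp 2 y
  have hinner : y ⬝ᵥ M *ᵥ y = inner ℝ v (toEuclideanLin M v) := by
    rw [toLpLin_toLp, toLin'_apply, EuclideanSpace.inner_toLp_toLp, star_trivial, dotProduct_comm]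
  have hnorm : y ⬝ᵥ y = ‖v‖ ^ 2 := by
    rw [← real_inner_self_eq_norm_sq, EuclideanSpace.inner_toLp_toLp, star_trivial]
  calc y ⬝ᵥ M *ᵥ y ≤ ‖v‖ * ‖toEuclideanLin M v‖ := hinner ▸ real_inner_le_norm _ _
    _ ≤ ‖v‖ * (specNorm M * ‖v‖) :=
      mul_le_mul_of_nonneg_left ((toEuclideanLin M).toContinuousLinearMap.le_opNorm v)
        (norm_nonneg _)
    _ = specNorm M * (y ⬝ᵥ y) := by rw [hnorm]; ring

section Expectation

variable {Ω ι κ : Type*} [Fintype ι] [MeasurableSpace Ω] {μ : Measure Ω}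

theorem integral_dotProduct_mulVec_of_indepFun (N : Ω → Matrix ι ι ℝ) (y : Ω → ι → ℝ)
    (hN : ∀ j j', Integrable (fun ω => N ω j j') μ)
    (hy : ∀ j j', Integrable (fun ω => y ω j * y ω j') μ)
    (hind : ∀ j j', IndepFun (fun ω => N ω j j') (fun ω => y ω j * y ω j') μ) :
    ∫ ω, y ω ⬝ᵥ N ω *ᵥ y ω ∂μ = ∑ j, ∑ j', (∫ ω, N ω j j' ∂μ) * ∫ ω, y ω j * y ω j' ∂μ := by
  have hint : ∀ j j', Integrable (fun ω => N ω j j' * (y ω j * y ω j')) μ :=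
    fun j j' => (hind j j').integrable_mul (hN j j') (hy j j')
  simp_rw [dotProduct_mulVec_eq_sum]
  rw [integral_finsetSum _ fun j _ => integrable_finsetSum _ fun j' _ => hint j j']
  refine Finset.sum_congr rfl fun j _ => ?_
  rw [integral_finsetSum _ fun j' _ => hint j j']
  exact Finset.sum_congr rfl fun j' _ =>
    (hind j j').integral_mul_eq_mul_integral (hN j j').1 (hy j j').1

theorem integral_dotProduct_mulVec_eq_of_indepFun [IsProbabilityMeasure μ]
    (N : Ω → Matrix ι ι ℝ) (y : Ω → ι → ℝ) (M : Matrix ι ι ℝ)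
    (hN : ∀ j j', Integrable (fun ω => N ω j j') μ)
    (hy : ∀ j j', Integrable (fun ω => y ω j * y ω j') μ)
    (hind : ∀ j j', IndepFun (fun ω => N ω j j') (fun ω => y ω j * y ω j') μ)
    (hM : ∀ j j', ∫ ω, N ω j j' ∂μ = M j j') :
    ∫ ω, y ω ⬝ᵥ N ω *ᵥ y ω ∂μ = ∫ ω, y ω ⬝ᵥ M *ᵥ y ω ∂μ := by
  rw [integral_dotProduct_mulVec_of_indepFun N y hN hy hind,
    integral_dotProduct_mulVec_of_indepFun (fun _ => M) y (fun _ _ => integrable_const _) hy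
      (fun _ _ => indepFun_const_left _ _)]
  simp only [hM, integral_const, probReal_univ, one_smul]

theorem integral_dotProduct_mulVec_le_specNorm_mul {n : ℕ} (M : Matrix (Fin n) (Fin n) ℝ)
    (y : Ω → Fin n → ℝ) (hy : ∀ j j', Integrable (fun ω => y ω j * y ω j') μ) :
    ∫ ω, y ω ⬝ᵥ M *ᵥ y ω ∂μ ≤ specNorm M * ∫ ω, y ω ⬝ᵥ y ω ∂μ := by
  have hquad : Integrable (fun ω => y ω ⬝ᵥ M *ᵥ y ω) μ := by
    simp_rw [dotProduct_mulVec_eq_sum]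
    exact integrable_finsetSum _ fun j _ => integrable_finsetSum _ fun j' _ =>
      (hy j j').const_mul _
  have hsq : Integrable (fun ω => y ω ⬝ᵥ y ω) μ :=
    integrable_finsetSum _ fun j _ => hy j j
  rw [← integral_const_mul]
  exact integral_mono hquad (hsq.const_mul _) fun ω => dotProduct_mulVec_le_specNorm_mul M (y ω)

variable [IsProbabilityMeasure μ] [DecidableEq ι] [Fintype κ]

lemma integrable_transpose_mul_self_add_mul_diagonal_apply (A L : Matrix κ ι ℝ)
    {ζ : ι → Ω → ℝ} (hζ : ∀ j, Integrable (ζ j) μ)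
    (hζζ : ∀ j j', Integrable (fun ω => ζ j ω * ζ j' ω) μ) (j j' : ι) :
    Integrable (fun ω =>
      ((A + L * diagonal fun i => ζ i ω)ᵀ * (A + L * diagonal fun i => ζ i ω)) j j') μ := by
  simp_rw [transpose_mul_self_add_mul_diagonal_apply]
  fun_prop (disch := first | exact hζ _ | exact hζζ _ _)

lemma integral_transpose_mul_self_add_mul_diagonal_apply (A L : Matrix κ ι ℝ)
    {ζ : ι → Ω → ℝ} {v : ι → ℝ} (hζ : ∀ j, Integrable (ζ j) μ)
    (hζζ : ∀ j j', Integrable (fun ω => ζ j ω * ζ j' ω) μ) (h1 : ∀ j, ∫ ω, ζ j ω ∂μ = 1)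
    (h2 : ∀ j j', ∫ ω, ζ j ω * ζ j' ω ∂μ = 1 + if j = j' then v j else 0) (j j' : ι) :
    ∫ ω, ((A + L * diagonal fun i => ζ i ω)ᵀ * (A + L * diagonal fun i => ζ i ω)) j j' ∂μ =
      ((A + L)ᵀ * (A + L) + diagonal fun i => (Lᵀ * L) i i * v i) j j' := by
  simp_rw [transpose_mul_self_add_mul_diagonal_apply]
  rw [integral_add, integral_add, integral_add]
  · simp only [integral_const, probReal_univ, one_smul, integral_const_mul, h1, h2,
      transpose_add, Matrix.add_mul, Matrix.mul_add, Matrix.add_apply, diagonal_apply]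
    split_ifs with h
    · subst h; ring
    · ring
  all_goals fun_prop (disch := first | exact hζ _ | exact hζζ _ _)

end Expectation

section Bernoulli

variable {Ω ι : Type*} [MeasurableSpace Ω] {μ : Measure Ω}

lemma integral_eq_of_eq_zero_or_one {f : Ω → ℝ} {q : ℝ} (hf : Measurable f)
    (h01 : ∀ ω, f ω = 0 ∨ f ω = 1) (hq : 0 ≤ q) (hμ : μ {ω | f ω = 1} = ENNReal.ofReal q) :
    ∫ ω, f ω ∂μ = q := by
  have hind : (fun ω => f ω) = (f ⁻¹' {1}).indicator 1 := by
    funext ω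
    rcases h01 ω with h | h <;> simp [h]
  rw [hind, integral_indicator_one (hf (measurableSet_singleton 1)), measureReal_def,
    show f ⁻¹' {1} = {ω | f ω = 1} from rfl, hμ, ENNReal.toReal_ofReal hq]

lemma integrable_of_eq_zero_or_one [IsFiniteMeasure μ] {f : Ω → ℝ} (hf : Measurable f)
    (h01 : ∀ ω, f ω = 0 ∨ f ω = 1) : Integrable f μ :=
  .of_bound hf.aestronglyMeasurable 1 <| ae_of_all _ fun ω => by
    rcases h01 ω with h | h <;> simp [h]

lemma integral_div_eq_one_of_eq_zero_or_one {f : Ω → ℝ} {q : ℝ} (hf : Measurable f)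
    (h01 : ∀ ω, f ω = 0 ∨ f ω = 1) (hq : 0 < q) (hμ : μ {ω | f ω = 1} = ENNReal.ofReal q) :
    ∫ ω, f ω / q ∂μ = 1 := by
  rw [integral_div, integral_eq_of_eq_zero_or_one hf h01 hq.le hμ, div_self hq.ne']

variable {c : ι → Ω → ℝ} {p : ι → ℝ}

lemma integrable_div_mul_div_of_eq_zero_or_one [IsFiniteMeasure μ]
    (hc : ∀ i, Measurable (c i)) (h01 : ∀ i ω, c i ω = 0 ∨ c i ω = 1) (i j : ι) :
    Integrable (fun ω => c i ω / p i * (c j ω / p j)) μ := by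
  simp_rw [div_mul_div_comm]
  refine (integrable_of_eq_zero_or_one ((hc i).mul (hc j)) fun ω => ?_).div_const _
  rcases h01 i ω with h | h <;> simp [h, h01 j ω]

lemma integral_div_mul_div_of_eq_zero_or_one [IsProbabilityMeasure μ] [DecidableEq ι]
    (hp : ∀ i, 0 < p i) (hc : ∀ i, Measurable (c i)) (h01 : ∀ i ω, c i ω = 0 ∨ c i ω = 1)
    (hber : ∀ i, μ {ω | c i ω = 1} = ENNReal.ofReal (p i))
    (hind : Pairwise fun i j => IndepFun (c i) (c j) μ) (i j : ι) :
    ∫ ω, c i ω / p i * (c j ω / p j) ∂μ = 1 + if i = j then 1 / p i - 1 else 0 := by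
  have hmean : ∀ i, ∫ ω, c i ω ∂μ = p i := fun i =>
    integral_eq_of_eq_zero_or_one (hc i) (h01 i) (hp i).le (hber i)
  split_ifs with hij
  · subst hij
    have hsq : ∀ ω, c i ω / p i * (c i ω / p i) = c i ω / p i ^ 2 := fun ω => by
      rcases h01 i ω with h | h <;> simp [h, sq]
    simp_rw [hsq, integral_div, hmean]
    field_simp [(hp i).ne']
    ring
  · simp_rw [div_mul_div_comm, integral_div]
    have hprod := (hind hij).integral_mul_eq_mul_integral (hc i).aestronglyMeasurable
      (hc j).aestronglyMeasurable
    rw [Pi.mul_def] at hprod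
    rw [hprod, hmean, hmean]
    field_simp [(hp i).ne', (hp j).ne']
    ring

variable {κ : Type*} [Fintype ι] [DecidableEq ι] [Fintype κ] [IsProbabilityMeasure μ]

lemma integrable_transpose_mul_self_add_mul_diagonal_div_apply (A L : Matrix κ ι ℝ)
    (hc : ∀ i, Measurable (c i)) (h01 : ∀ i ω, c i ω = 0 ∨ c i ω = 1) (j j' : ι) :
    Integrable (fun ω => ((A + L * diagonal fun i => c i ω / p i)ᵀ *
      (A + L * diagonal fun i => c i ω / p i)) j j') μ :=
  integrable_transpose_mul_self_add_mul_diagonal_apply A L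
    (fun i => (integrable_of_eq_zero_or_one (hc i) (h01 i)).div_const _)
    (integrable_div_mul_div_of_eq_zero_or_one hc h01) j j'

lemma integral_transpose_mul_self_add_mul_diagonal_div_apply (A L : Matrix κ ι ℝ)
    (hp : ∀ i, 0 < p i) (hc : ∀ i, Measurable (c i)) (h01 : ∀ i ω, c i ω = 0 ∨ c i ω = 1)
    (hber : ∀ i, μ {ω | c i ω = 1} = ENNReal.ofReal (p i))
    (hind : Pairwise fun i j => IndepFun (c i) (c j) μ) (j j' : ι) :
    ∫ ω, ((A + L * diagonal fun i => c i ω / p i)ᵀ *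
      (A + L * diagonal fun i => c i ω / p i)) j j' ∂μ =
      ((A + L)ᵀ * (A + L) + diagonal fun i => -(∑ k, L k i ^ 2) + (∑ k, L k i ^ 2) / p i) j j' := by
  rw [integral_transpose_mul_self_add_mul_diagonal_apply A L
    (fun i => (integrable_of_eq_zero_or_one (hc i) (h01 i)).div_const _)
    (integrable_div_mul_div_of_eq_zero_or_one hc h01)
    (fun i => integral_div_eq_one_of_eq_zero_or_one (hc i) (h01 i) (hp i) (hber i))
    (integral_div_mul_div_of_eq_zero_or_one hp hc h01 hber hind)]
  simp only [Matrix.add_apply, diagonal_apply, mul_apply, transpose_apply, sq]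
  split_ifs <;> ring

end Bernoulli

section GeneratedSigmaAlgebra

variable {Ω ι β : Type*} [mβ : MeasurableSpace β]

abbrev sigmaOf (c : ι → Ω → β) (s : Set ι) : MeasurableSpace Ω :=
  ⨆ i ∈ s, mβ.comap (c i)

lemma measurable_sigmaOf {c : ι → Ω → β} {s : Set ι} {i : ι} (hi : i ∈ s) :
    Measurable[sigmaOf c s] (c i) :=
  Measurable.of_comap_le (le_iSup₂ (f := fun i (_ : i ∈ s) => mβ.comap (c i)) i hi)

lemma sigmaOf_mono (c : ι → Ω → β) {s t : Set ι} (hst : s ⊆ t) : sigmaOf c s ≤ sigmaOf c t :=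
  biSup_mono hst

lemma sigmaOf_le [mΩ : MeasurableSpace Ω] {c : ι → Ω → β} (hc : ∀ i, Measurable (c i))
    (s : Set ι) : sigmaOf c s ≤ mΩ :=
  iSup₂_le fun i _ => (hc i).comap_le

lemma ProbabilityTheory.iIndepFun.indepFun_of_measurable_sigmaOf [MeasurableSpace Ω]
    {μ : Measure Ω} {c : ι → Ω → β} (hindep : iIndepFun c μ) (hc : ∀ i, Measurable (c i))
    {S T : Set ι} (hST : Disjoint S T) {γ δ : Type*} [MeasurableSpace γ] [MeasurableSpace δ]
    {f : Ω → γ} {g : Ω → δ} (hf : Measurable[sigmaOf c S] f) (hg : Measurable[sigmaOf c T] g) :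
    IndepFun f g μ := by
  rw [IndepFun_iff_Indep]
  refine indep_of_indep_of_le_right (indep_of_indep_of_le_left ?_ hf.comap_le) hg.comap_le
  exact indep_iSup_of_disjoint (fun i => (hc i).comap_le) ((iIndepFun_iff_iIndep _ _ _).1 hindep)
    hST

end GeneratedSigmaAlgebra

section Recursion

variable {Ω : Type*} {n : ℕ} {A L : Matrix (Fin n) (Fin n) ℝ}
  {p : Fin n → ℝ} {c : ℕ → Fin n → Ω → ℝ} {x : ℕ → Ω → Fin n → ℝ} {x₀ : Fin n → ℝ}

lemma measurable_sigmaOf_of_recursion (hx0 : ∀ ω, x 0 ω = x₀)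
    (hxrec : ∀ k ω, x (k + 1) ω = (A + L * diagonal fun i => c k i ω / p i) *ᵥ x k ω)
    (k : ℕ) : Measurable[sigmaOf (fun ki : ℕ × Fin n => c ki.1 ki.2) {ki | ki.1 < k}] (x k) := by
  induction k with
  | zero =>
    rw [funext hx0]
    exact measurable_const
  | succ k ih =>
    have hc : ∀ i, Measurable[sigmaOf (fun ki : ℕ × Fin n => c ki.1 ki.2) {ki | ki.1 < k + 1}]
        (c k i) := fun i => measurable_sigmaOf (i := (k, i)) (Nat.lt_succ_self k)
    have hx := ih.mono (sigmaOf_mono _ fun ki (h : ki.1 < k) => Nat.lt_succ_of_lt h) le_rfl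
    rw [funext (hxrec k)]
    refine Measurable.mulVec (fun i j => ?_) hx
    simp only [Matrix.add_apply, mul_diagonal]
    fun_prop (disch := exact hc _)

lemma measurable_pi_sigmaOf_fst_eq (c : ℕ → Fin n → Ω → ℝ) (k : ℕ) :
    Measurable[sigmaOf (fun ki : ℕ × Fin n => c ki.1 ki.2) {ki | ki.1 = k}]
      fun ω i => c k i ω := by
  -- `measurable_pi_iff` takes the σ-algebra on `Ω` as an instance.
  let := sigmaOf (fun ki : ℕ × Fin n => c ki.1 ki.2) {ki | ki.1 = k}
  exact measurable_pi_iff.2 fun i => measurable_sigmaOf (i := (k, i)) rfl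

attribute [local instance] Matrix.linftyOpNormedAddCommGroup in
lemma exists_abs_le_of_recursion (hp : ∀ i, 0 < p i) (hc : ∀ k i ω, |c k i ω| ≤ 1)
    (hx0 : ∀ ω, x 0 ω = x₀)
    (hxrec : ∀ k ω, x (k + 1) ω = (A + L * diagonal fun i => c k i ω / p i) *ᵥ x k ω)
    (k : ℕ) : ∃ C, ∀ ω i, |x k ω i| ≤ C := by
  suffices h : ∃ C, ∀ ω, ‖x k ω‖ ≤ C by
    obtain ⟨C, hC⟩ := h
    exact ⟨C, fun ω i => (norm_le_pi_norm (x k ω) i).trans (hC ω)⟩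
  induction k with
  | zero => exact ⟨‖x₀‖, fun ω => by rw [hx0]⟩
  | succ k ih =>
    obtain ⟨C, hC⟩ := ih
    refine ⟨(‖A‖ + ‖L‖ * ‖p⁻¹‖) * C, fun ω => ?_⟩
    have hdiag : ‖diagonal fun i => c k i ω / p i‖ ≤ ‖p⁻¹‖ := by
      rw [linfty_opNorm_diagonal]
      refine pi_norm_le_iff_of_nonneg (norm_nonneg _) |>.2 fun i => ?_
      refine le_trans ?_ (norm_le_pi_norm p⁻¹ i)
      rw [Real.norm_eq_abs, Real.norm_eq_abs, abs_div, Pi.inv_apply, abs_inv]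
      exact div_le_of_le_mul₀ (abs_nonneg _) (inv_nonneg.2 (abs_nonneg _))
        (by rw [inv_mul_cancel₀ (abs_pos.2 (hp i).ne').ne']; exact hc k i ω)
    calc ‖x (k + 1) ω‖ ≤ ‖A + L * diagonal fun i => c k i ω / p i‖ * ‖x k ω‖ :=
          hxrec k ω ▸ linfty_opNorm_mulVec _ _
      _ ≤ (‖A‖ + ‖L‖ * ‖p⁻¹‖) * C := by
          refine mul_le_mul ((norm_add_le _ _).trans (add_le_add_right ?_ _)) (hC ω)
            (norm_nonneg _) (by positivity)
          exact (linfty_opNorm_mul _ _).trans (mul_le_mul_of_nonneg_left hdiag (norm_nonneg _))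

lemma integrable_mul_apply_of_recursion [MeasurableSpace Ω] {μ : Measure Ω} [IsFiniteMeasure μ]
    (hp : ∀ i, 0 < p i) (hmeas : ∀ k i, Measurable (c k i)) (hc : ∀ k i ω, |c k i ω| ≤ 1)
    (hx0 : ∀ ω, x 0 ω = x₀)
    (hxrec : ∀ k ω, x (k + 1) ω = (A + L * diagonal fun i => c k i ω / p i) *ᵥ x k ω)
    (k : ℕ) (j j' : Fin n) : Integrable (fun ω => x k ω j * x k ω j') μ := by
  obtain ⟨C, hC⟩ := exists_abs_le_of_recursion hp hc hx0 hxrec k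
  have hx : Measurable (x k) := (measurable_sigmaOf_of_recursion hx0 hxrec k).mono
    (sigmaOf_le (c := fun ki : ℕ × Fin n => c ki.1 ki.2) (fun ki => hmeas ki.1 ki.2) _) le_rfl
  refine .of_bound (((measurable_pi_apply j).comp hx).mul
    ((measurable_pi_apply j').comp hx)).aestronglyMeasurable (C * C) (ae_of_all _ fun ω => ?_)
  rw [Real.norm_eq_abs, abs_mul]
  exact mul_le_mul (hC ω j) (hC ω j') (abs_nonneg _) ((abs_nonneg _).trans (hC ω j))

lemma indepFun_of_recursion [MeasurableSpace Ω] {μ : Measure Ω}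
    (hindep : iIndepFun (fun ki : ℕ × Fin n => c ki.1 ki.2) μ)
    (hmeas : ∀ k i, Measurable (c k i)) (hx0 : ∀ ω, x 0 ω = x₀)
    (hxrec : ∀ k ω, x (k + 1) ω = (A + L * diagonal fun i => c k i ω / p i) *ᵥ x k ω)
    (k : ℕ) {γ δ : Type*} [MeasurableSpace γ] [MeasurableSpace δ] {F : (Fin n → ℝ) → γ}
    {G : (Fin n → ℝ) → δ} (hF : Measurable F) (hG : Measurable G) :
    IndepFun (fun ω => F fun i => c k i ω) (fun ω => G (x k ω)) μ := by
  refine hindep.indepFun_of_measurable_sigmaOf (fun ki => hmeas ki.1 ki.2)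
    (S := {ki | ki.1 = k}) (T := {ki | ki.1 < k})
    (Set.disjoint_left.2 fun ki h1 h2 => (Nat.ne_of_lt h2) h1) ?_
    (hG.comp (measurable_sigmaOf_of_recursion hx0 hxrec k))
  exact hF.comp (measurable_pi_sigmaOf_fst_eq c k)

end Recursion

/-- For the closed-loop stochastic recursion
`x(k+1) = (A + B K C(k)) x(k)` with `C(k) = Diag(c₁(k)/p₁, …, cₙ(k)/pₙ)` built from
mutually independent Bernoulli random variables with parameters `pᵢ ∈ (0,1]`, with
`D := A + B K`, `L := B K`, `sᵢ := Σₖ L_{k,i}²` and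
`g(p₁,…,pₙ) := ‖Dᵀ D + Diag(−s₁ + s₁/p₁, …, −sₙ + sₙ/pₙ)‖₂`, one has
`E[‖x(k+1)‖²] ≤ g(p₁,…,pₙ) · E[‖x(k)‖²]` for every `k`. -/
theorem expected_square_norm_decay_adaptive
    {n m : ℕ} (A : Matrix (Fin n) (Fin n) ℝ) (B : Matrix (Fin n) (Fin m) ℝ)
    (K : Matrix (Fin m) (Fin n) ℝ)
    {Ω : Type*} [MeasurableSpace Ω] (μ : Measure Ω) [IsProbabilityMeasure μ]
    (p : Fin n → ℝ) (hp : ∀ i, p i ∈ Set.Ioc (0 : ℝ) 1)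
    (c : ℕ → Fin n → Ω → ℝ)
    (hmeas : ∀ k i, Measurable (c k i))
    (h01 : ∀ k i ω, c k i ω = 0 ∨ c k i ω = 1)
    (hber : ∀ k i, μ {ω | c k i ω = 1} = ENNReal.ofReal (p i))
    (hindep : iIndepFun (β := fun _ : ℕ × Fin n => ℝ)
      (fun ki ω => c ki.1 ki.2 ω) μ)
    (x₀ : Fin n → ℝ) (x : ℕ → Ω → Fin n → ℝ)
    (hx0 : ∀ ω, x 0 ω = x₀)
    (hxrec : ∀ k ω, x (k + 1) ω =
      (A + B * K * Matrix.diagonal (fun i => c k i ω / p i)).mulVec (x k ω))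
    (k : ℕ) :
    (∫ ω, ∑ i, (x (k + 1) ω i) ^ 2 ∂μ) ≤
      specNorm ((A + B * K)ᵀ * (A + B * K) + Matrix.diagonal
          (fun i => -(∑ j, ((B * K) j i) ^ 2) + (∑ j, ((B * K) j i) ^ 2) / p i)) *
        (∫ ω, ∑ i, (x k ω i) ^ 2 ∂μ) := by
  have hp0 : ∀ i, 0 < p i := fun i => (hp i).1
  have hc : ∀ k i ω, |c k i ω| ≤ 1 := fun k i ω => by rcases h01 k i ω with h | h <;> simp [h]
  have hsq : ∀ v : Fin n → ℝ, ∑ i, v i ^ 2 = v ⬝ᵥ v := fun v => by simp [dotProduct, sq]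
  have hy := integrable_mul_apply_of_recursion (μ := μ) hp0 hmeas hc hx0 hxrec k
  have hind : ∀ j j', IndepFun (fun ω => ((A + B * K * diagonal fun i => c k i ω / p i)ᵀ *
      (A + B * K * diagonal fun i => c k i ω / p i)) j j') (fun ω => x k ω j * x k ω j') μ :=
    fun j j' => indepFun_of_recursion hindep hmeas hx0 hxrec k
      (F := fun d => ((A + B * K * diagonal fun i => d i / p i)ᵀ *
        (A + B * K * diagonal fun i => d i / p i)) j j') (G := fun v => v j * v j')
      (by simp_rw [transpose_mul_self_add_mul_diagonal_apply]; fun_prop) (by fun_prop)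
  have hpair : Pairwise fun i j => IndepFun (c k i) (c k j) μ := fun i j hij =>
    hindep.indepFun (i := (k, i)) (j := (k, j)) (by simpa using hij)
  calc (∫ ω, ∑ i, (x (k + 1) ω i) ^ 2 ∂μ)
      = ∫ ω, x k ω ⬝ᵥ ((A + B * K * diagonal fun i => c k i ω / p i)ᵀ *
          (A + B * K * diagonal fun i => c k i ω / p i)) *ᵥ x k ω ∂μ := by
        simp_rw [hsq, hxrec, mulVec_dotProduct_mulVec_self]
    _ = ∫ ω, x k ω ⬝ᵥ ((A + B * K)ᵀ * (A + B * K) + Matrix.diagonal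
          (fun i => -(∑ j, ((B * K) j i) ^ 2) + (∑ j, ((B * K) j i) ^ 2) / p i)) *ᵥ x k ω ∂μ := by
        refine integral_dotProduct_mulVec_eq_of_indepFun _ _ _ ?_ hy hind ?_
        · exact integrable_transpose_mul_self_add_mul_diagonal_div_apply _ _ (hmeas k) (h01 k)
        · exact integral_transpose_mul_self_add_mul_diagonal_div_apply _ _ hp0 (hmeas k) (h01 k)
            (hber k) hpair
    _ ≤ _ := integral_dotProduct_mulVec_le_specNorm_mul _ _ hy
    _ = _ := by simp_rw [hsq]
end

section
/- Consider the closed-loop stochastic recursion x(k+1) = (A + B K C(k)) x(k) with deterministic initial condition x(0) = x₀ ∈ ℝⁿ, where C(k) = Diag(c₁(k)/p₁, …, cₙ(k)/pₙ) and the family (cᵢ(k))_{k∈ℕ, 1≤i≤n} consists of mutually independent Bernoulli random variables with parameters pᵢ ∈ (0,1]. Let D := A + B K, L := B K, and sᵢ := Σ_{k=1}^{n} L_{k,i}². Assume ‖D‖₂ < 1, sᵢ > 0 for every i, and pᵢ > 1/(1 + (1 − ‖D‖₂²)/sᵢ) for every i ∈ {1,…,n}. Then the closed-loop system is asymptotically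 mean-square stable: E[‖x(k)‖²] → 0 as k → ∞ for every initial condition x₀ ∈ ℝⁿ. -/
/-!
Put `ξᵢ(k) := cᵢ(k) / pᵢ`, so that `x(k+1) = (A + L Diag ξ(k)) x(k)` with `E ξᵢ(k) = 1` and
`Var ξᵢ(k) = 1/pᵢ - 1`. The vector `x(k)` is a function of the coins drawn before time `k`, hence
independent of `ξ(k)`, so `E‖x(k+1)‖²` may be computed by freezing `x(k) = v` and averaging over
`ξ(k)` alone. Row by row, `((A + L Diag ξ) v)ᵣ` is a sum of pairwise independent terms, and adding
their variances gives `E‖(A + L Diag ξ) v‖² = ‖D v‖² + Σᵢ sᵢ (1/pᵢ - 1) vᵢ² ≤ ρ ‖v‖²`, where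
`ρ < 1` bounds every `‖D‖₂² + sᵢ (1/pᵢ - 1)`; this is exactly what the hypothesis on `pᵢ` says.
Therefore `E‖x(k)‖² ≤ ρᵏ ‖x₀‖²`.

Second moments are handled as lower Lebesgue integrals, which needs no integrability of `x(k)`.
-/

open MeasureTheory ProbabilityTheory Matrix Filter

open scoped ENNReal Topology

lemma sum_sq_mulVec_le_specNorm_sq {n : ℕ} (M : Matrix (Fin n) (Fin n) ℝ) (v : Fin n → ℝ) :
    ∑ i, (M *ᵥ v) i ^ 2 ≤ specNorm M ^ 2 * ∑ i, v i ^ 2 := by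
  have h := (LinearMap.toContinuousLinearMap (toEuclideanLin M)).le_opNorm (WithLp.toLp 2 v)
  simpa [specNorm, mul_pow, EuclideanSpace.norm_sq_eq] using
    pow_le_pow_left₀ (norm_nonneg _) h 2

lemma add_mul_one_div_sub_one_lt_one {a s p : ℝ} (ha : a < 1) (hs : 0 < s) (hp : 0 < p)
    (h : 1 / (1 + (1 - a) / s) < p) : a + s * (1 / p - 1) < 1 := by
  have hinv : 1 / p < 1 + (1 - a) / s :=
    (one_div_lt hp (by have := div_pos (sub_pos.2 ha) hs; linarith)).2 h
  have := mul_lt_mul_of_pos_left (sub_lt_sub_right hinv 1) hs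
  rw [add_sub_cancel_left, mul_div_cancel₀ _ hs.ne'] at this
  linarith

lemma exists_lt_one_forall_le {ι : Type*} [Finite ι] {f : ι → ℝ} (h : ∀ i, f i < 1) :
    ∃ ρ < 1, ∀ i, f i ≤ ρ :=
  ((eventually_nhdsWithin_of_forall (s := Set.Iio 1) fun _ hρ => hρ).and
    (eventually_all.2 fun i => mem_of_superset (Ioo_mem_nhdsLT (h i)) fun _ hρ => hρ.1.le)).exists

lemma ENNReal.tendsto_atTop_zero_of_succ_le_mul {u : ℕ → ℝ≥0∞} {r : ℝ≥0∞} (hr : r < 1)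
    (h0 : u 0 ≠ ∞) (h : ∀ k, u (k + 1) ≤ r * u k) : Tendsto u atTop (𝓝 0) := by
  have hle : ∀ k, u k ≤ r ^ k * u 0 := by
    intro k
    induction k with
    | zero => simp
    | succ k ih =>
      calc u (k + 1) ≤ r * u k := h k
        _ ≤ r * (r ^ k * u 0) := by gcongr
        _ = r ^ (k + 1) * u 0 := by ring
  have hlim : Tendsto (fun k => r ^ k * u 0) atTop (𝓝 0) := by
    simpa using ENNReal.Tendsto.mul_const (ENNReal.tendsto_pow_atTop_nhds_zero_of_lt_one hr)
      (Or.inr h0)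
  exact tendsto_of_tendsto_of_tendsto_of_le_of_le tendsto_const_nhds hlim (fun _ => zero_le) hle

lemma tendsto_integral_zero_of_lintegral_succ_le_mul {Ω : Type*} [MeasurableSpace Ω]
    {μ : Measure Ω} {f : ℕ → Ω → ℝ} (hf : ∀ k, AEStronglyMeasurable (f k) μ)
    (hf0 : ∀ k ω, 0 ≤ f k ω) {r : ℝ≥0∞} (hr : r < 1)
    (h0 : ∫⁻ ω, ENNReal.ofReal (f 0 ω) ∂μ ≠ ∞)
    (h : ∀ k, ∫⁻ ω, ENNReal.ofReal (f (k + 1) ω) ∂μ ≤ r * ∫⁻ ω, ENNReal.ofReal (f k ω) ∂μ) :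
    Tendsto (fun k => ∫ ω, f k ω ∂μ) atTop (𝓝 0) := by
  simp_rw [fun k => integral_eq_lintegral_of_nonneg_ae (ae_of_all _ (hf0 k)) (hf k)]
  simpa [Function.comp_def] using (ENNReal.tendsto_toReal ENNReal.zero_ne_top).comp
    (ENNReal.tendsto_atTop_zero_of_succ_le_mul hr h0 h)

section ZeroOne

variable {Ω : Type*} [MeasurableSpace Ω] {μ : Measure Ω} {f : Ω → ℝ}

lemma memLp_of_forall_eq_zero_or_one [IsFiniteMeasure μ] (hf : Measurable f)
    (h01 : ∀ ω, f ω = 0 ∨ f ω = 1) (q : ℝ≥0∞) : MemLp f q μ :=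
  MemLp.of_bound hf.aestronglyMeasurable 1
    (ae_of_all _ fun ω => by rcases h01 ω with h | h <;> simp [h])

lemma integral_eq_measureReal_of_forall_eq_zero_or_one (hf : Measurable f)
    (h01 : ∀ ω, f ω = 0 ∨ f ω = 1) : ∫ ω, f ω ∂μ = μ.real {ω | f ω = 1} := by
  have hf_eq : f = {ω | f ω = 1}.indicator 1 := by
    ext ω
    rcases h01 ω with h | h <;> simp [Set.indicator, h]
  conv_lhs => rw [hf_eq]
  exact integral_indicator_one (hf (measurableSet_singleton 1))

lemma variance_eq_of_forall_eq_zero_or_one [IsProbabilityMeasure μ] (hf : Measurable f)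
    (h01 : ∀ ω, f ω = 0 ∨ f ω = 1) :
    Var[f; μ] = μ.real {ω | f ω = 1} * (1 - μ.real {ω | f ω = 1}) := by
  have hsq : f ^ 2 = f := by
    ext ω
    rcases h01 ω with h | h <;> simp [h]
  rw [variance_eq_sub (memLp_of_forall_eq_zero_or_one hf h01 2), hsq,
    integral_eq_measureReal_of_forall_eq_zero_or_one hf h01]
  ring

lemma integral_div_eq_one_of_forall_eq_zero_or_one (hf : Measurable f)
    (h01 : ∀ ω, f ω = 0 ∨ f ω = 1) {q : ℝ} (hq : μ {ω | f ω = 1} = ENNReal.ofReal q)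
    (hq0 : 0 < q) : ∫ ω, f ω / q ∂μ = 1 := by
  rw [integral_div, integral_eq_measureReal_of_forall_eq_zero_or_one hf h01, measureReal_def, hq,
    ENNReal.toReal_ofReal hq0.le, div_self hq0.ne']

lemma variance_div_eq_of_forall_eq_zero_or_one [IsProbabilityMeasure μ] (hf : Measurable f)
    (h01 : ∀ ω, f ω = 0 ∨ f ω = 1) {q : ℝ} (hq : μ {ω | f ω = 1} = ENNReal.ofReal q)
    (hq0 : 0 < q) : Var[fun ω => f ω / q; μ] = 1 / q - 1 := by
  simp_rw [div_eq_mul_inv (f _)]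
  rw [variance_mul_const, variance_eq_of_forall_eq_zero_or_one hf h01, measureReal_def, hq,
    ENNReal.toReal_ofReal hq0.le]
  field_simp

end ZeroOne

section SecondMoment

variable {Ω : Type*} [MeasurableSpace Ω] {μ : Measure Ω}

lemma MeasureTheory.MemLp.const_add_mul_mul_const [IsFiniteMeasure μ] {ξ : Ω → ℝ}
    (hξ : MemLp ξ 2 μ) (a b c : ℝ) : MemLp (fun ω => (a + b * ξ ω) * c) 2 μ :=
  ((memLp_const a).add (hξ.const_mul b) : MemLp (fun ω => a + b * ξ ω) 2 μ).mul_const c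

lemma integral_sq_sum_of_pairwise_indepFun [IsProbabilityMeasure μ] {ι : Type*} [Fintype ι]
    {X : ι → Ω → ℝ} (hX : ∀ i, MemLp (X i) 2 μ) (hindep : Pairwise fun i j => X i ⟂ᵢ[μ] X j) :
    ∫ ω, (∑ i, X i ω) ^ 2 ∂μ = (∑ i, ∫ ω, X i ω ∂μ) ^ 2 + ∑ i, Var[X i; μ] := by
  have hvar := IndepFun.variance_sum (s := Finset.univ) (fun i _ => hX i)
    (fun i _ j _ hij => hindep hij)
  rw [variance_eq_sub (memLp_finsetSum' _ fun i _ => hX i)] at hvar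
  simp only [Pi.pow_apply, Finset.sum_apply] at hvar
  rw [integral_finsetSum _ fun i _ => (hX i).integrable one_le_two] at hvar
  linarith

variable {ι κ : Type*} [Fintype ι] [DecidableEq ι] {ξ : ι → Ω → ℝ}

lemma mulVec_add_mul_diagonal_apply (A L : Matrix κ ι ℝ) (d v : ι → ℝ) (r : κ) :
    ((A + L * diagonal d) *ᵥ v) r = ∑ i, (A r i + L r i * d i) * v i := by
  simp [mulVec, dotProduct, mul_diagonal]

lemma memLp_mulVec_add_mul_diagonal_apply [IsFiniteMeasure μ] (hξ : ∀ i, MemLp (ξ i) 2 μ)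
    (A L : Matrix κ ι ℝ) (v : ι → ℝ) (r : κ) : MemLp (fun ω => ((A + L * diagonal fun i => ξ i ω) *ᵥ v) r) 2 μ := by
  simp_rw [mulVec_add_mul_diagonal_apply]
  exact memLp_finsetSum _ fun i _ => (hξ i).const_add_mul_mul_const _ _ _

variable [IsProbabilityMeasure μ]

lemma integral_sq_mulVec_add_mul_diagonal_apply (hξ : ∀ i, MemLp (ξ i) 2 μ)
    (hmean : ∀ i, ∫ ω, ξ i ω ∂μ = 1) (hindep : Pairwise fun i j => ξ i ⟂ᵢ[μ] ξ j)
    (A L : Matrix κ ι ℝ) (v : ι → ℝ) (r : κ) :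
    ∫ ω, ((A + L * diagonal fun i => ξ i ω) *ᵥ v) r ^ 2 ∂μ
      = ((A + L) *ᵥ v) r ^ 2 + ∑ i, L r i ^ 2 * Var[ξ i; μ] * v i ^ 2 := by
  simp_rw [mulVec_add_mul_diagonal_apply]
  have hindep' : Pairwise fun i j =>
      (fun ω => (A r i + L r i * ξ i ω) * v i) ⟂ᵢ[μ] fun ω => (A r j + L r j * ξ j ω) * v j := by
    intro i j hij
    have hφ : ∀ i, Measurable fun t : ℝ => (A r i + L r i * t) * v i := fun i => by fun_prop
    exact (hindep hij).comp (hφ i) (hφ j)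
  have hmean' : ∀ i, ∫ ω, (A r i + L r i * ξ i ω) * v i ∂μ = (A r i + L r i) * v i := fun i => by
    rw [integral_mul_const, integral_add (integrable_const _)
      (((hξ i).integrable one_le_two).const_mul _), integral_const_mul, hmean, integral_const]
    simp
  have hvar : ∀ i, Var[fun ω => (A r i + L r i * ξ i ω) * v i; μ]
      = L r i ^ 2 * Var[ξ i; μ] * v i ^ 2 := fun i => by
    rw [variance_mul_const, variance_const_add ((hξ i).const_mul _).aestronglyMeasurable,
      variance_const_mul]
  rw [integral_sq_sum_of_pairwise_indepFun (fun i => (hξ i).const_add_mul_mul_const _ _ _)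
    hindep']
  simp only [hmean', hvar]
  simp [mulVec, dotProduct, add_mul]

lemma integral_sum_sq_mulVec_add_mul_diagonal [Fintype κ] (hξ : ∀ i, MemLp (ξ i) 2 μ)
    (hmean : ∀ i, ∫ ω, ξ i ω ∂μ = 1) (hindep : Pairwise fun i j => ξ i ⟂ᵢ[μ] ξ j)
    (A L : Matrix κ ι ℝ) (v : ι → ℝ) :
    ∫ ω, ∑ r, ((A + L * diagonal fun i => ξ i ω) *ᵥ v) r ^ 2 ∂μ
      = ∑ r, ((A + L) *ᵥ v) r ^ 2 + ∑ i, (∑ r, L r i ^ 2) * Var[ξ i; μ] * v i ^ 2 := by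
  rw [integral_finsetSum _ fun r _ =>
    (memLp_mulVec_add_mul_diagonal_apply hξ A L v r).integrable_sq]
  simp_rw [integral_sq_mulVec_add_mul_diagonal_apply hξ hmean hindep, Finset.sum_add_distrib,
    Finset.sum_mul]
  rw [Finset.sum_comm (γ := κ)]

end SecondMoment

lemma integral_sum_sq_mulVec_add_mul_diagonal_le {Ω : Type*} [MeasurableSpace Ω]
    {μ : Measure Ω} [IsProbabilityMeasure μ] {n : ℕ} {ξ : Fin n → Ω → ℝ}
    (hξ : ∀ i, MemLp (ξ i) 2 μ) (hmean : ∀ i, ∫ ω, ξ i ω ∂μ = 1)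
    (hindep : Pairwise fun i j => ξ i ⟂ᵢ[μ] ξ j) (A L : Matrix (Fin n) (Fin n) ℝ) {ρ : ℝ}
    (hρ : ∀ i, specNorm (A + L) ^ 2 + (∑ r, L r i ^ 2) * Var[ξ i; μ] ≤ ρ) (v : Fin n → ℝ) :
    ∫ ω, ∑ r, ((A + L * diagonal fun i => ξ i ω) *ᵥ v) r ^ 2 ∂μ ≤ ρ * ∑ i, v i ^ 2 := by
  rw [integral_sum_sq_mulVec_add_mul_diagonal hξ hmean hindep]
  calc _ ≤ specNorm (A + L) ^ 2 * ∑ i, v i ^ 2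
          + ∑ i, (∑ r, L r i ^ 2) * Var[ξ i; μ] * v i ^ 2 := by
        gcongr
        exact sum_sq_mulVec_le_specNorm_sq _ _
    _ = ∑ i, (specNorm (A + L) ^ 2 + (∑ r, L r i ^ 2) * Var[ξ i; μ]) * v i ^ 2 := by
        simp only [Finset.mul_sum, ← Finset.sum_add_distrib, add_mul]
    _ ≤ ρ * ∑ i, v i ^ 2 := by
        rw [Finset.mul_sum]
        gcongr with i
        exact hρ i

lemma ProbabilityTheory.IndepFun.lintegral_comp_eq_lintegral_lintegral {Ω α β : Type*}
    [MeasurableSpace Ω] [MeasurableSpace α] [MeasurableSpace β] {μ : Measure Ω}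
    [IsFiniteMeasure μ] {X : Ω → α} {Y : Ω → β} (hXY : X ⟂ᵢ[μ] Y) (hX : Measurable X)
    (hY : Measurable Y) {g : α → β → ℝ≥0∞} (hg : Measurable (Function.uncurry g)) :
    ∫⁻ ω, g (X ω) (Y ω) ∂μ = ∫⁻ ω, ∫⁻ ω', g (X ω') (Y ω) ∂μ ∂μ := by
  calc ∫⁻ ω, g (X ω) (Y ω) ∂μ
      = ∫⁻ z, Function.uncurry g z ∂(μ.map fun ω => (X ω, Y ω)) :=
        (lintegral_map hg (hX.prodMk hY)).symm
    _ = ∫⁻ z, Function.uncurry g z ∂((μ.map X).prod (μ.map Y)) := by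
        rw [(indepFun_iff_map_prod_eq_prod_map_map hX.aemeasurable hY.aemeasurable).1 hXY]
    _ = ∫⁻ b, ∫⁻ a, g a b ∂(μ.map X) ∂(μ.map Y) := lintegral_prod_symm _ hg.aemeasurable
    _ = ∫⁻ ω, ∫⁻ ω', g (X ω') (Y ω) ∂μ ∂μ := by
        rw [lintegral_map hg.lintegral_prod_left hY]
        exact lintegral_congr fun ω =>
          lintegral_map (f := fun a => g a (Y ω)) (hg.comp measurable_prodMk_right) hX

section Recursion

variable {Ω ι β γ : Type*} [MeasurableSpace β] [MeasurableSpace γ]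

abbrev sigmaBefore (ξ : ℕ → ι → Ω → β) (k : ℕ) : MeasurableSpace Ω :=
  ⨆ q ∈ {q : ℕ × ι | q.1 < k}, MeasurableSpace.comap (ξ q.1 q.2) inferInstance

lemma measurable_pi_of_comap_le {m : MeasurableSpace Ω} {f : ι → Ω → β}
    (h : ∀ i, MeasurableSpace.comap (f i) inferInstance ≤ m) : Measurable[m] fun ω i => f i ω :=
  @measurable_pi_lambda _ _ _ m _ _ fun i => Measurable.of_comap_le (h i)

variable {ξ : ℕ → ι → Ω → β} {F : (ι → β) → γ → γ} {x : ℕ → Ω → γ}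

lemma sigmaBefore_le [MeasurableSpace Ω] (hξ : ∀ k i, Measurable (ξ k i)) (k : ℕ) :
    sigmaBefore ξ k ≤ ‹MeasurableSpace Ω› :=
  iSup₂_le fun q _ => (hξ q.1 q.2).comap_le

lemma measurable_sigmaBefore_of_recursion (hF : Measurable (Function.uncurry F)) {x₀ : γ}
    (hx0 : ∀ ω, x 0 ω = x₀) (hrec : ∀ k ω, x (k + 1) ω = F (fun i => ξ k i ω) (x k ω))
    (k : ℕ) : Measurable[sigmaBefore ξ k] (x k) := by
  induction k with
  | zero => exact funext hx0 ▸ measurable_const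
  | succ k ih =>
    have hnoise : Measurable[sigmaBefore ξ (k + 1)] fun ω i => ξ k i ω :=
      measurable_pi_of_comap_le fun i =>
        le_iSup₂ (f := fun (q : ℕ × ι) (_ : q ∈ {q : ℕ × ι | q.1 < k + 1}) =>
          MeasurableSpace.comap (ξ q.1 q.2) inferInstance) (k, i) (Nat.lt_succ_self k)
    have hpast : sigmaBefore ξ k ≤ sigmaBefore ξ (k + 1) :=
      biSup_mono fun q (hq : q.1 < k) => Nat.lt_succ_of_lt hq
    rw [show x (k + 1) = fun ω => F (fun i => ξ k i ω) (x k ω) from funext (hrec k)]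
    exact hF.comp (hnoise.prodMk (ih.mono hpast le_rfl))

lemma indepFun_of_recursion_s17 [MeasurableSpace Ω] {μ : Measure Ω}
    (hξ : ∀ k i, Measurable (ξ k i)) (hindep : iIndepFun (fun (q : ℕ × ι) ω => ξ q.1 q.2 ω) μ)
    (hF : Measurable (Function.uncurry F)) {x₀ : γ} (hx0 : ∀ ω, x 0 ω = x₀)
    (hrec : ∀ k ω, x (k + 1) ω = F (fun i => ξ k i ω) (x k ω)) (k : ℕ) :
    (fun ω i => ξ k i ω) ⟂ᵢ[μ] x k := by
  have hST := indep_iSup_of_disjoint (fun q => (hξ q.1 q.2).comap_le) hindep.iIndep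
    (S := {q : ℕ × ι | q.1 = k}) (T := {q : ℕ × ι | q.1 < k})
    (Set.disjoint_left.2 fun q (h1 : q.1 = k) (h2 : q.1 < k) => (h1 ▸ h2).false)
  have hnoise : Measurable[⨆ q ∈ {q : ℕ × ι | q.1 = k},
      MeasurableSpace.comap (ξ q.1 q.2) inferInstance] fun ω i => ξ k i ω :=
    measurable_pi_of_comap_le fun i =>
      le_iSup₂ (f := fun (q : ℕ × ι) (_ : q ∈ {q : ℕ × ι | q.1 = k}) =>
        MeasurableSpace.comap (ξ q.1 q.2) inferInstance) (k, i) rfl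
  rw [IndepFun_iff_Indep]
  exact indep_of_indep_of_le_right (indep_of_indep_of_le_left hST hnoise.comap_le)
    (measurable_sigmaBefore_of_recursion hF hx0 hrec k).comap_le

end Recursion

lemma lintegral_sum_sq_mulVec_le_of_indepFun {Ω : Type*} [MeasurableSpace Ω] {μ : Measure Ω}
    [IsProbabilityMeasure μ] {n : ℕ} {ξ : Fin n → Ω → ℝ} (hξm : ∀ i, Measurable (ξ i))
    (hξ : ∀ i, MemLp (ξ i) 2 μ) (hmean : ∀ i, ∫ ω, ξ i ω ∂μ = 1)
    (hindep : Pairwise fun i j => ξ i ⟂ᵢ[μ] ξ j) {A L : Matrix (Fin n) (Fin n) ℝ} {ρ : ℝ}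
    (hρ : ∀ i, specNorm (A + L) ^ 2 + (∑ r, L r i ^ 2) * Var[ξ i; μ] ≤ ρ)
    {X : Ω → Fin n → ℝ} (hX : Measurable X) (hξX : (fun ω i => ξ i ω) ⟂ᵢ[μ] X) :
    ∫⁻ ω, ENNReal.ofReal (∑ r, ((A + L * diagonal fun i => ξ i ω) *ᵥ X ω) r ^ 2) ∂μ
      ≤ ENNReal.ofReal ρ * ∫⁻ ω, ENNReal.ofReal (∑ i, X ω i ^ 2) ∂μ := by
  have hg : Measurable (Function.uncurry fun (z v : Fin n → ℝ) =>
      ENNReal.ofReal (∑ r, ((A + L * diagonal z) *ᵥ v) r ^ 2)) :=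
    ENNReal.measurable_ofReal.comp (by fun_prop : Continuous _).measurable
  rw [hξX.lintegral_comp_eq_lintegral_lintegral (measurable_pi_lambda _ hξm) hX hg,
    ← lintegral_const_mul' _ _ ENNReal.ofReal_ne_top]
  refine lintegral_mono fun ω => ?_
  rw [← ofReal_integral_eq_lintegral_ofReal (integrable_finsetSum _ fun r _ =>
      (memLp_mulVec_add_mul_diagonal_apply hξ A L (X ω) r).integrable_sq)
      (ae_of_all _ fun _ => by positivity), ← ENNReal.ofReal_mul' (by positivity)]
  exact ENNReal.ofReal_le_ofReal
    (integral_sum_sq_mulVec_add_mul_diagonal_le hξ hmean hindep A L hρ _)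

/-- For the closed-loop stochastic recursion
`x(k+1) = (A + B K C(k)) x(k)` with `C(k) = Diag(c₁(k)/p₁, …, cₙ(k)/pₙ)` built from
mutually independent Bernoulli random variables with parameters `pᵢ ∈ (0,1]`, with
`D := A + B K`, `L := B K`, `sᵢ := Σₖ L_{k,i}²`: if `‖D‖₂ < 1`, every `sᵢ > 0`, and
`pᵢ > 1/(1 + (1 − ‖D‖₂²)/sᵢ)` for every `i`, then the closed-loop system is
asymptotically mean-square stable: `E[‖x(k)‖²] → 0` for every initial condition. -/
theorem amss_adaptive
    {n m : ℕ} (A : Matrix (Fin n) (Fin n) ℝ) (B : Matrix (Fin n) (Fin m) ℝ)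
    (K : Matrix (Fin m) (Fin n) ℝ)
    {Ω : Type*} [MeasurableSpace Ω] (μ : Measure Ω) [IsProbabilityMeasure μ]
    (p : Fin n → ℝ) (hp : ∀ i, p i ∈ Set.Ioc (0 : ℝ) 1)
    (c : ℕ → Fin n → Ω → ℝ)
    (hmeas : ∀ k i, Measurable (c k i))
    (h01 : ∀ k i ω, c k i ω = 0 ∨ c k i ω = 1)
    (hber : ∀ k i, μ {ω | c k i ω = 1} = ENNReal.ofReal (p i))
    (hindep : iIndepFun
      (fun (ki : ℕ × Fin n) ω => c ki.1 ki.2 ω) μ)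
    (hD : specNorm (A + B * K) < 1)
    (hs : ∀ i, 0 < ∑ j, ((B * K) j i) ^ 2)
    (hpgt : ∀ i, p i >
      1 / (1 + (1 - specNorm (A + B * K) ^ 2) / (∑ j, ((B * K) j i) ^ 2)))
    (x₀ : Fin n → ℝ) (x : ℕ → Ω → Fin n → ℝ)
    (hx0 : ∀ ω, x 0 ω = x₀)
    (hxrec : ∀ k ω, x (k + 1) ω =
      (A + B * K * Matrix.diagonal (fun i => c k i ω / p i)).mulVec (x k ω)) :
    Tendsto (fun k => ∫ ω, ∑ i, (x k ω i) ^ 2 ∂μ) atTop (nhds 0) := by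
  have hp0 : ∀ i, 0 < p i := fun i => (hp i).1
  set ξ : ℕ → Fin n → Ω → ℝ := fun k i ω => c k i ω / p i with hξ
  have hξm : ∀ k i, Measurable (ξ k i) := fun k i => (hmeas k i).div_const _
  have hξmem : ∀ k i, MemLp (ξ k i) 2 μ := fun k i => by
    simpa only [hξ, div_eq_mul_inv] using
      (memLp_of_forall_eq_zero_or_one (hmeas k i) (h01 k i) 2).mul_const (p i)⁻¹
  have hξindep : iIndepFun (fun (q : ℕ × Fin n) ω => ξ q.1 q.2 ω) μ :=
    hindep.comp (fun q t => t / p q.2) fun q => measurable_id.div_const _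
  have hF : Measurable (Function.uncurry fun (z v : Fin n → ℝ) =>
      (A + B * K * diagonal z) *ᵥ v) := (by fun_prop : Continuous _).measurable
  have hxm : ∀ k, Measurable (x k) := fun k =>
    (measurable_sigmaBefore_of_recursion hF hx0 hxrec k).mono (sigmaBefore_le hξm k) le_rfl
  obtain ⟨ρ, hρ1, hρ⟩ := exists_lt_one_forall_le fun i => add_mul_one_div_sub_one_lt_one
    (pow_lt_one₀ (norm_nonneg _) hD two_ne_zero) (hs i) (hp0 i) (hpgt i)
  refine tendsto_integral_zero_of_lintegral_succ_le_mul
    (fun k => (by fun_prop : Measurable _).aestronglyMeasurable) (fun k ω => by positivity)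
    (ENNReal.ofReal_lt_one.2 hρ1) (by simp [hx0]) fun k => ?_
  simp_rw [hxrec k]
  exact lintegral_sum_sq_mulVec_le_of_indepFun (hξm k) (hξmem k)
    (fun i => integral_div_eq_one_of_forall_eq_zero_or_one (hmeas k i) (h01 k i) (hber k i) (hp0 i))
    (fun i j hij => hξindep.indepFun (i := (k, i)) (j := (k, j)) (by simpa using hij))
    (fun i => variance_div_eq_of_forall_eq_zero_or_one (hmeas k i) (h01 k i) (hber k i) (hp0 i) ▸
      hρ i)
    (hxm k) (indepFun_of_recursion_s17 hξm hξindep hF hx0 hxrec k)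
end
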